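/- Combining both phases: under the PL condition with constant μ on f_{D'}, after T−K gradient descent steps on f_D satisfying f_{D'}(θ_{t+1}) − f* ≤ (1 − ημ(n−m)/n)(f_{D'}(θ_t) − f*) + c (with c = ηG²m/n + Lη²Gm/n) followed by K gradient descent steps on f_{D'} with step size η ≤ 1/L, the final iterate θ''_K satisfies f_{D'}(θ''_K) − f* ≤ (1 − ημ(n−m)/n)^{T−K}(1 − ημ)^K (f_{D'}(θ_0) − f*) + (1 − ημ)^K (G²m + LηGm)/(μ(n−m)). -/

import Mathlib

/-!
Smoothness gives the descent lemma, which together with the PL inequality makes every gradient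
step with `η ≤ 1 / L` contract the optimality gap by `1 - η μ`. The phase-one inequality
`u (t + 1) ≤ a u t + b` unrolls to `u t ≤ aᵗ u 0 + b / (1 - a)`, and the phase-two contraction
then multiplies this bound by `(1 - η μ)ᴷ`.
-/

section Recurrence

variable {R : Type*} [CommSemiring R] [PartialOrder R] [IsOrderedRing R]

theorem le_pow_mul_add_of_le_mul_add {u : ℕ → R} {a b C : R} (ha : 0 ≤ a) (hC : 0 ≤ C)
    (hfix : a * C + b ≤ C) (hu : ∀ t, u (t + 1) ≤ a * u t + b) (t : ℕ) :
    u t ≤ a ^ t * u 0 + C := by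
  induction t with
  | zero => simpa using le_add_of_nonneg_right hC
  | succ t ih =>
    calc u (t + 1) ≤ a * u t + b := hu t
      _ ≤ a * (a ^ t * u 0 + C) + b := by gcongr
      _ = a ^ (t + 1) * u 0 + (a * C + b) := by ring
      _ ≤ a ^ (t + 1) * u 0 + C := by gcongr

end Recurrence

section GradientDescent

variable {E : Type*} [NormedAddCommGroup E] [InnerProductSpace ℝ E] [CompleteSpace E]
  {f : E → ℝ} {L : ℝ}

theorem le_add_inner_gradient_add_sq_of_lipschitz_gradient (hf : Differentiable ℝ f)
    (hlip : ∀ x y, ‖gradient f x - gradient f y‖ ≤ L * ‖x - y‖) (x v : E) :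
    f (x + v) ≤ f x + inner ℝ (gradient f x) v + L / 2 * ‖v‖ ^ 2 := by
  -- `f` minus its quadratic upper model along the ray `x + t • v` is antitone for `t ≥ 0`.
  set g : ℝ → ℝ := fun t ↦ f (x + t • v) - t * inner ℝ (gradient f x) v - L / 2 * t ^ 2 * ‖v‖ ^ 2
  set g' : ℝ → ℝ := fun t ↦
    inner ℝ (gradient f (x + t • v)) v - inner ℝ (gradient f x) v - L * t * ‖v‖ ^ 2
  have hg : ∀ t, HasDerivAt g (g' t) t := by
    intro t
    have hline : HasDerivAt (fun s : ℝ ↦ x + s • v) v t := by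
      simpa using ((hasDerivAt_id t).smul_const v).const_add x
    have hgrad := (hf (x + t • v)).hasGradientAt
    have hcomp := hgrad.hasFDerivAt.comp_hasDerivAt t hline
    refine ((hcomp.sub ((hasDerivAt_id t).mul_const (inner ℝ (gradient f x) v))).sub
      (((hasDerivAt_pow 2 t).const_mul (L / 2)).mul_const (‖v‖ ^ 2))).congr_deriv ?_
    simp only [g', InnerProductSpace.toDual_apply_apply, Nat.cast_ofNat]
    ring
  have hg'_nonpos : ∀ t ∈ interior (Set.Ici (0 : ℝ)), g' t ≤ 0 := by
    intro t ht
    rw [interior_Ici, Set.mem_Ioi] at ht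
    have hgrad_sub : ‖gradient f (x + t • v) - gradient f x‖ ≤ L * (t * ‖v‖) := by
      simpa [norm_smul, abs_of_pos ht] using hlip (x + t • v) x
    calc g' t = inner ℝ (gradient f (x + t • v) - gradient f x) v - L * t * ‖v‖ ^ 2 := by
          simp only [g', inner_sub_left]
      _ ≤ ‖gradient f (x + t • v) - gradient f x‖ * ‖v‖ - L * t * ‖v‖ ^ 2 := by
          gcongr; exact real_inner_le_norm _ _
      _ ≤ L * (t * ‖v‖) * ‖v‖ - L * t * ‖v‖ ^ 2 := by gcongr
      _ = 0 := by ring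
  have hanti : AntitoneOn g (Set.Ici 0) :=
    antitoneOn_of_hasDerivWithinAt_nonpos (convex_Ici 0)
      (fun t _ ↦ (hg t).continuousAt.continuousWithinAt)
      (fun t _ ↦ (hg t).hasDerivWithinAt) hg'_nonpos
  have := hanti Set.self_mem_Ici (Set.mem_Ici.mpr zero_le_one) zero_le_one
  simp only [g, zero_smul, add_zero, one_smul] at this
  linarith

variable {μ η fstar : ℝ}
  (hf : Differentiable ℝ f) (hlip : ∀ x y, ‖gradient f x - gradient f y‖ ≤ L * ‖x - y‖)
  (hPL : ∀ x, μ * (f x - fstar) ≤ 1 / 2 * ‖gradient f x‖ ^ 2) (hη : 0 ≤ η) (hηL : L * η ≤ 1)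
include hf hlip hPL hη hηL

theorem sub_le_one_sub_mul_of_gradient_step (x : E) :
    f (x - η • gradient f x) - fstar ≤ (1 - η * μ) * (f x - fstar) := by
  have hdesc := le_add_inner_gradient_add_sq_of_lipschitz_gradient hf hlip x (-(η • gradient f x))
  rw [← sub_eq_add_neg, inner_neg_right, real_inner_smul_right, real_inner_self_eq_norm_sq,
    norm_neg, norm_smul, Real.norm_eq_abs, abs_of_nonneg hη] at hdesc
  have hsmall : L / 2 * (η * ‖gradient f x‖) ^ 2 ≤ η / 2 * ‖gradient f x‖ ^ 2 := by
    have := mul_le_mul_of_nonneg_left hηL (by positivity : 0 ≤ η / 2 * ‖gradient f x‖ ^ 2)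
    linarith
  nlinarith [mul_le_mul_of_nonneg_left (hPL x) hη]

theorem sub_le_pow_mul_of_gradientDescent (hημ : η * μ ≤ 1) {x : ℕ → E}
    (hx : ∀ t, x (t + 1) = x t - η • gradient f (x t)) (t : ℕ) :
    f (x t) - fstar ≤ (1 - η * μ) ^ t * (f (x 0) - fstar) := by
  have hstep (t : ℕ) : f (x (t + 1)) - fstar ≤ (1 - η * μ) * (f (x t) - fstar) + 0 := by
    rw [hx t, add_zero]
    exact sub_le_one_sub_mul_of_gradient_step hf hlip hPL hη hηL (x t)
  simpa using le_pow_mul_add_of_le_mul_add (u := fun t ↦ f (x t) - fstar) (sub_nonneg.mpr hημ)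
    le_rfl (by simp) hstep t

end GradientDescent

theorem two_phase_PL_bound_general (d n m T K : ℕ) (hmn : m < n)
    (fD' : EuclideanSpace ℝ (Fin d) → ℝ)
    (μ L G η fstar : ℝ) (hμ : 0 < μ) (hL : 0 < L) (hG : 0 < G) (hη : 0 < η)
    (hηL : η ≤ 1 / L) (hημ : η * μ < 1)
    (hdiff : Differentiable ℝ fD')
    (hlip : ∀ x y : EuclideanSpace ℝ (Fin d),
      ‖gradient fD' x - gradient fD' y‖ ≤ L * ‖x - y‖)
    (hPL : ∀ x : EuclideanSpace ℝ (Fin d),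
      μ * (fD' x - fstar) ≤ (1 / 2) * ‖gradient fD' x‖ ^ 2)
    (θ θ'' : ℕ → EuclideanSpace ℝ (Fin d))
    (hphase1 : ∀ t, fD' (θ (t + 1)) - fstar ≤
      (1 - η * μ * ((n : ℝ) - m) / n) * (fD' (θ t) - fstar)
        + η * G ^ 2 * m / n + L * η ^ 2 * G * m / n)
    (hinit : θ'' 0 = θ (T - K))
    (hphase2 : ∀ t, θ'' (t + 1) = θ'' t - η • gradient fD' (θ'' t)) :
    fD' (θ'' K) - fstar ≤
      (1 - η * μ * ((n : ℝ) - m) / n) ^ (T - K) * (1 - η * μ) ^ K * (fD' (θ 0) - fstar)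
        + (1 - η * μ) ^ K * (G ^ 2 * m + L * η * G * m) / (μ * ((n : ℝ) - m)) := by
  have hn : (0 : ℝ) < n := Nat.cast_pos.mpr ((Nat.zero_le m).trans_lt hmn)
  have hnm : (0 : ℝ) < n - m := sub_pos.mpr (Nat.cast_lt.mpr hmn)
  have hLη : L * η ≤ 1 := by rwa [le_div_iff₀ hL, mul_comm] at hηL
  set a := 1 - η * μ * ((n : ℝ) - m) / n
  set C := (G ^ 2 * m + L * η * G * m) / (μ * ((n : ℝ) - m))
  have ha : 0 ≤ a := by
    have : η * μ * ((n : ℝ) - m) ≤ η * μ * n := by gcongr; linarith [Nat.cast_nonneg (α := ℝ) m]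
    have : η * μ * ((n : ℝ) - m) / n ≤ η * μ := by rwa [div_le_iff₀ hn]
    linarith
  have hC : 0 ≤ C := by positivity
  -- `C = b / (1 - a)` is the fixed point of the phase-one recursion `u ↦ a * u + b`.
  have hfix : a * C + (η * G ^ 2 * m / n + L * η ^ 2 * G * m / n) = C := by
    simp only [a, C]
    field_simp
    ring
  have phase1 := le_pow_mul_add_of_le_mul_add (u := fun t ↦ fD' (θ t) - fstar) ha hC hfix.le
    (fun t ↦ (hphase1 t).trans_eq (by ring)) (T - K)
  have phase2 := sub_le_pow_mul_of_gradientDescent hdiff hlip hPL hη.le hLη hημ.le hphase2 K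
  rw [hinit] at phase2
  calc fD' (θ'' K) - fstar ≤ (1 - η * μ) ^ K * (fD' (θ (T - K)) - fstar) := phase2
    _ ≤ (1 - η * μ) ^ K * (a ^ (T - K) * (fD' (θ 0) - fstar) + C) := by gcongr
    _ = _ := by ring

/-- Two-phase bound: `T - K` gradient descent steps on the full-data loss
(satisfying the per-step mixed-dataset PL inequality) followed by `K` gradient
descent steps on the retained-data loss `f_{D'}` (which is `L`-smooth and
`μ`-PL with minimum `f*`). -/
theorem two_phase_PL_bound (d n m T K : ℕ) (hm : 1 ≤ m) (hmn : m < n) (hKT : K ≤ T)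
    (fD' : EuclideanSpace ℝ (Fin d) → ℝ)
    (μ L G η fstar : ℝ) (hμ : 0 < μ) (hL : 0 < L) (hG : 0 < G) (hη : 0 < η)
    (hηL : η ≤ 1 / L) (hημ : η * μ < 1)
    (hdiff : Differentiable ℝ fD')
    (hlip : ∀ x y : EuclideanSpace ℝ (Fin d),
      ‖gradient fD' x - gradient fD' y‖ ≤ L * ‖x - y‖)
    (hlb : ∀ x : EuclideanSpace ℝ (Fin d), fstar ≤ fD' x)
    (hPL : ∀ x : EuclideanSpace ℝ (Fin d),
      μ * (fD' x - fstar) ≤ (1 / 2) * ‖gradient fD' x‖ ^ 2)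
    (θ θ'' : ℕ → EuclideanSpace ℝ (Fin d))
    (hphase1 : ∀ t, fD' (θ (t + 1)) - fstar ≤
      (1 - η * μ * ((n : ℝ) - m) / n) * (fD' (θ t) - fstar)
        + η * G ^ 2 * m / n + L * η ^ 2 * G * m / n)
    (hinit : θ'' 0 = θ (T - K))
    (hphase2 : ∀ t, θ'' (t + 1) = θ'' t - η • gradient fD' (θ'' t)) :
    fD' (θ'' K) - fstar ≤
      (1 - η * μ * ((n : ℝ) - m) / n) ^ (T - K) * (1 - η * μ) ^ K * (fD' (θ 0) - fstar)
        + (1 - η * μ) ^ K * (G ^ 2 * m + L * η * G * m) / (μ * ((n : ℝ) - m)) :=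
  two_phase_PL_bound_general d n m T K hmn fD' μ L G η fstar hμ hL hG hη hηL hημ hdiff hlip hPL θ
    θ'' hphase1 hinit hphase2
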